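/- arXiv:1407.3099 — 3 statements merged into one kernel-verified Lean document; each statement's English description precedes it below -/
import Mathlib

section
/- Fix a real number x and let f(z) = A(1/2; z) · ζ_A(1+2z) · q^{-z/2} · q^{xz/2} / z. Then f has a pole of order 2 at z = 0, and for all sufficiently small ρ > 0 one has (1/(πi)) ∮_{|z|=ρ} f(z) dz = (1/2)·P(1)·{ x + 1 + 4 Σ_{P monic irreducible} deg(P)/( |P|(|P|+1) − 1 ) }, where P(1) = ∏_{P monic irreducible} ( 1 − 1/((|P|+1)|P|) ). Equivalently, the residue of f at z = 0 equals (1/4)P(1)(1+x) + P(1)·Σ_{P} deg(P)/(|P|(|P|+1)−1). -/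
/-!
Each Euler factor of `A(1/2; z)` simplifies to `a_P(z) = 1 - |P|^{-1-2z}/(|P|+1)`, which is
`1 + O(|P|^{-3/2})` uniformly on `Re z ≥ -1/4`. Hence `A = exp (∑_P log a_P)` is holomorphic
there, with `A(0) = P(1)` and `A'(0)/A(0) = 2 log q · ∑_P deg P/(|P|(|P|+1)-1)`.
Writing `1 - q^{-2z} = 2z log q · E(-2z log q)` with the entire function `E(w) = (e^w - 1)/w`
(`E(0) = 1`, `E'(0) = 1/2`) gives `f(z) = h(z)/z²` with `h` holomorphic near `0` and
`h(0) = P(1)/(2 log q) ≠ 0`. By Cauchy's formula the contour integral is `2πi h'(0)`, and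
`h'(0) = P(1)(∑_P deg P/(|P|(|P|+1)-1) + (x+1)/4)`.
-/

/-- The norm `|P| = q^{deg P}` of a polynomial over `F_q`, as a real number. -/
noncomputable def pnorm {Fq : Type*} [Field Fq] [Fintype Fq] (P : Polynomial Fq) : ℝ :=
  (Fintype.card Fq : ℝ) ^ P.natDegree

/-- The Euler product `A(1/2; z)` (case `k = 1`), a function of `z ∈ ℂ`, with
`|P|^w = exp(w·(deg P)·log q)`. -/
noncomputable def eulerA1 (Fq : Type*) [Field Fq] [Fintype Fq] (z : ℂ) : ℂ :=
  ∏' P : {P : Polynomial Fq // P.Monic ∧ Irreducible P},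
    (1 - Complex.exp (-(1 + 2 * z) * ((P.1.natDegree : ℂ) * Real.log (Fintype.card Fq)))) *
      ((1 / 2) *
        ((1 - Complex.exp (-(1 / 2 + z) *
            ((P.1.natDegree : ℂ) * Real.log (Fintype.card Fq))))⁻¹ +
         (1 + Complex.exp (-(1 / 2 + z) *
            ((P.1.natDegree : ℂ) * Real.log (Fintype.card Fq))))⁻¹) +
        ((pnorm P.1 : ℝ) : ℂ)⁻¹) *
      (1 + ((pnorm P.1 : ℝ) : ℂ)⁻¹)⁻¹

/-- The integrand `f(z) = A(1/2;z)·ζ_A(1+2z)·q^{-z/2}·q^{xz/2}/z`, where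
`ζ_A(1+2z) = 1/(1 − q^{-2z})` and `q^w = exp(w·log q)`. -/
noncomputable def integrand9 (Fq : Type*) [Field Fq] [Fintype Fq] (x : ℝ) (z : ℂ) : ℂ :=
  eulerA1 Fq z * (1 - Complex.exp (-2 * z * Real.log (Fintype.card Fq)))⁻¹ *
    Complex.exp (-(z / 2) * Real.log (Fintype.card Fq)) *
    Complex.exp (((x : ℂ) * z / 2) * Real.log (Fintype.card Fq)) / z

open Complex Polynomial Topology
open scoped Nat

noncomputable def expSubOneDiv (w : ℂ) : ℂ := ∑' n : ℕ, w ^ n / ((n + 1)! : ℂ)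

lemma norm_pow_div_succ_factorial_le {w : ℂ} {R : ℝ} (hw : ‖w‖ ≤ R) (n : ℕ) :
    ‖w ^ n / ((n + 1)! : ℂ)‖ ≤ R ^ n / n ! := by
  rw [norm_div, norm_pow, Complex.norm_natCast]
  have hR : 0 ≤ R := (norm_nonneg w).trans hw
  gcongr
  exact n.le_succ

lemma exp_eq_one_add_mul_expSubOneDiv (w : ℂ) : exp w = 1 + w * expSubOneDiv w := by
  rw [Complex.exp_eq_exp_ℂ, NormedSpace.exp_eq_tsum_div]
  beta_reduce
  rw [(NormedSpace.expSeries_div_summable w).tsum_eq_zero_add, expSubOneDiv, ← tsum_mul_left]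
  simp only [pow_zero, Nat.factorial_zero, Nat.cast_one, div_one, pow_succ]
  congr 1
  exact tsum_congr fun n => by ring

lemma expSubOneDiv_zero : expSubOneDiv 0 = 1 := by
  rw [expSubOneDiv, tsum_eq_single 0 fun n hn => by simp [hn]]
  simp

@[fun_prop]
lemma differentiable_expSubOneDiv : Differentiable ℂ expSubOneDiv := fun w =>
  (differentiableOn_tsum_of_summable_norm (Real.summable_pow_div_factorial (‖w‖ + 1))
    (fun n => ((differentiable_pow n).div_const _).differentiableOn)
    (Metric.isOpen_ball (x := 0) (ε := ‖w‖ + 1))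
    (fun n v hv => norm_pow_div_succ_factorial_le (mem_ball_zero_iff.mp hv).le n)).differentiableAt
    (Metric.isOpen_ball.mem_nhds (by simp))

lemma hasDerivAt_expSubOneDiv_zero : HasDerivAt expSubOneDiv (1 / 2) 0 := by
  have hsum := hasSum_deriv_of_summable_norm (F := fun n (w : ℂ) => w ^ n / ((n + 1)! : ℂ))
    (Real.summable_pow_div_factorial 1)
    (fun n => ((differentiable_pow n).div_const _).differentiableOn)
    (Metric.isOpen_ball (x := 0) (ε := 1))
    (fun n v hv => norm_pow_div_succ_factorial_le (mem_ball_zero_iff.mp hv).le n)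
    (Metric.mem_ball_self one_pos)
  have hterm (n : ℕ) :
      deriv (fun w : ℂ => w ^ n / ((n + 1)! : ℂ)) 0 = if n = 1 then 1 / 2 else 0 := by
    rcases n with _ | _ | n <;> simp [deriv_div_const, Nat.factorial]
  simp only [hterm] at hsum
  rw [(hasSum_ite_eq 1 (1 / 2 : ℂ)).unique hsum]
  exact differentiable_expSubOneDiv.differentiableAt.hasDerivAt

lemma expSubOneDiv_ne_zero {w : ℂ} (hw : ‖w‖ < 2 * Real.pi) : expSubOneDiv w ≠ 0 := by
  intro h
  rcases eq_or_ne w 0 with rfl | hw0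
  · simp [expSubOneDiv_zero] at h
  · obtain ⟨k, rfl⟩ := Complex.exp_eq_one_iff.mp
      (by rw [exp_eq_one_add_mul_expSubOneDiv, h, mul_zero, add_zero])
    have hk : (1 : ℝ) ≤ |(k : ℝ)| := by
      have : k ≠ 0 := by rintro rfl; simp at hw0
      exact_mod_cast Int.one_le_abs this
    have : ‖(k : ℂ) * (2 * Real.pi * I)‖ = |(k : ℝ)| * (2 * Real.pi) := by
      simp [abs_of_pos Real.pi_pos]
    nlinarith [Real.pi_pos]

lemma eulerA1_factor_identity {K : Type*} [Field K] [CharZero K] {E k : K} (h1 : 1 - E ≠ 0)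
    (h2 : 1 + E ≠ 0) (hk : k ≠ 0) (hk1 : k + 1 ≠ 0) :
    (1 - E ^ 2) * (1 / 2 * ((1 - E)⁻¹ + (1 + E)⁻¹) + k⁻¹) * (1 + k⁻¹)⁻¹ =
      1 - E ^ 2 / (k + 1) := by
  field_simp
  ring

section EulerFactor

variable {q : ℝ} {n : ℕ} {z : ℂ}

noncomputable def eulerFactor (q : ℝ) (n : ℕ) (z : ℂ) : ℂ :=
  1 - exp (-(1 + 2 * z) * (n * Real.log q)) / ((q ^ n : ℝ) + 1)

lemma norm_exp_mul_ofReal (w : ℂ) (a : ℝ) : ‖exp (w * a)‖ = Real.exp (w.re * a) := by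
  rw [Complex.norm_exp, Complex.re_mul_ofReal]

lemma norm_eulerFactor_sub_one (hq : 0 < q) :
    ‖eulerFactor q n z - 1‖ = Real.exp (-(1 + 2 * z.re) * (n * Real.log q)) / (q ^ n + 1) := by
  have hpos : 0 < q ^ n + 1 := by positivity
  rw [eulerFactor, sub_sub_cancel_left, norm_neg, norm_div, ← ofReal_natCast, ← ofReal_mul,
    norm_exp_mul_ofReal, ← ofReal_one, ← ofReal_add, norm_real, Real.norm_of_nonneg hpos.le]
  simp

lemma norm_eulerFactor_sub_one_le_half (hq : 1 ≤ q) (hz : -1 / 2 ≤ z.re) :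
    ‖eulerFactor q n z - 1‖ ≤ 1 / 2 := by
  rw [norm_eulerFactor_sub_one (by linarith), div_le_iff₀ (by positivity)]
  have hexp : Real.exp (-(1 + 2 * z.re) * (n * Real.log q)) ≤ 1 := by
    rw [Real.exp_le_one_iff]
    have : 0 ≤ n * Real.log q := mul_nonneg n.cast_nonneg (Real.log_nonneg hq)
    nlinarith
  nlinarith [one_le_pow₀ (n := n) hq]

lemma norm_eulerFactor_sub_one_le (hq : 1 ≤ q) (hz : -1 / 4 ≤ z.re) :
    ‖eulerFactor q n z - 1‖ ≤ Real.exp (-(3 / 2) * Real.log q) ^ n := by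
  have hnL : 0 ≤ n * Real.log q := mul_nonneg n.cast_nonneg (Real.log_nonneg hq)
  have hqn : q ^ n = Real.exp (n * Real.log q) := by
    rw [Real.exp_nat_mul, Real.exp_log (by linarith)]
  rw [norm_eulerFactor_sub_one (by linarith), ← Real.exp_nat_mul, hqn]
  calc Real.exp (-(1 + 2 * z.re) * (n * Real.log q)) / (Real.exp (n * Real.log q) + 1)
      ≤ Real.exp (-(1 + 2 * z.re) * (n * Real.log q)) / Real.exp (n * Real.log q) := by
        gcongr; linarith
    _ ≤ Real.exp (n * (-(3 / 2) * Real.log q)) := by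
        rw [← Real.exp_sub, Real.exp_le_exp]
        nlinarith

lemma eulerFactor_re_ge (hq : 1 ≤ q) (hz : -1 / 2 ≤ z.re) :
    1 / 2 ≤ (eulerFactor q n z).re := by
  have h := (abs_le.mp ((abs_re_le_norm _).trans
    (norm_eulerFactor_sub_one_le_half (n := n) hq hz))).1
  rw [sub_re, one_re] at h
  linarith

lemma eulerFactor_mem_slitPlane (hq : 1 ≤ q) (hz : -1 / 2 ≤ z.re) :
    eulerFactor q n z ∈ slitPlane :=
  Or.inl (by linarith [eulerFactor_re_ge (n := n) hq hz])

lemma norm_log_eulerFactor_le (hq : 1 ≤ q) (hz : -1 / 4 ≤ z.re) :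
    ‖log (eulerFactor q n z)‖ ≤ 3 / 2 * Real.exp (-(3 / 2) * Real.log q) ^ n := by
  have h := norm_log_one_add_half_le_self
    (norm_eulerFactor_sub_one_le_half (n := n) (z := z) hq (by linarith))
  rw [add_sub_cancel] at h
  exact h.trans (by gcongr; exact norm_eulerFactor_sub_one_le hq hz)

lemma hasDerivAt_eulerFactor (q : ℝ) (n : ℕ) (z : ℂ) :
    HasDerivAt (eulerFactor q n)
      (2 * (n * Real.log q) * exp (-(1 + 2 * z) * (n * Real.log q)) / ((q ^ n : ℝ) + 1)) z := by
  have hlin : HasDerivAt (fun w : ℂ => -(1 + 2 * w) * (n * Real.log q))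
      (-(2 * (n * Real.log q))) z := by
    simpa using (((hasDerivAt_id z).const_mul 2).const_add 1).neg.mul_const ((n : ℂ) * Real.log q)
  refine ((hlin.cexp.div_const (((q ^ n : ℝ) : ℂ) + 1)).const_sub 1).congr_deriv ?_
  ring

lemma differentiableOn_log_eulerFactor (hq : 1 ≤ q) :
    DifferentiableOn ℂ (fun w => log (eulerFactor q n w)) {z : ℂ | -1 / 2 < z.re} := fun w hw =>
  ((hasDerivAt_eulerFactor q n w).clog
    (eulerFactor_mem_slitPlane hq (le_of_lt hw))).differentiableAt.differentiableWithinAt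

lemma exp_neg_natCast_mul_log (hq : 0 < q) :
    exp (-(n * Real.log q)) = (((q ^ n)⁻¹ : ℝ) : ℂ) := by
  rw [← ofReal_natCast, ← ofReal_mul, ← ofReal_neg, ← ofReal_exp, Real.exp_neg,
    Real.exp_nat_mul, Real.exp_log hq]

lemma eulerFactor_zero (hq : 0 < q) :
    eulerFactor q n 0 = ((1 - ((q ^ n + 1) * q ^ n)⁻¹ : ℝ) : ℂ) := by
  rw [eulerFactor, mul_zero, add_zero, neg_one_mul, exp_neg_natCast_mul_log hq]
  push_cast
  field_simp

lemma hasDerivAt_log_eulerFactor_zero (hq : 1 ≤ q) :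
    HasDerivAt (fun w => log (eulerFactor q n w))
      ((2 * Real.log q * (n / (q ^ n * (q ^ n + 1) - 1)) : ℝ) : ℂ) 0 := by
  have hqn : 1 ≤ q ^ n := one_le_pow₀ hq
  have hden : 0 < q ^ n * (q ^ n + 1) - 1 := by nlinarith
  convert (hasDerivAt_eulerFactor q n 0).clog (eulerFactor_mem_slitPlane hq (by norm_num)) using 1
  rw [eulerFactor_zero (by linarith), mul_zero, add_zero, neg_one_mul,
    exp_neg_natCast_mul_log (by linarith)]
  have : q ^ n ≠ 0 := by positivity
  norm_cast
  field_simp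

lemma eulerA1_factor_eq_eulerFactor (hq : 1 < q) (hn : 0 < n) (hz : -1 / 2 < z.re) :
    (1 - exp (-(1 + 2 * z) * (n * Real.log q))) *
      ((1 / 2) * ((1 - exp (-(1 / 2 + z) * (n * Real.log q)))⁻¹ +
        (1 + exp (-(1 / 2 + z) * (n * Real.log q)))⁻¹) + ((q ^ n : ℝ) : ℂ)⁻¹) *
      (1 + ((q ^ n : ℝ) : ℂ)⁻¹)⁻¹ = eulerFactor q n z := by
  have hnorm : ‖exp (-(1 / 2 + z) * (n * Real.log q))‖ < 1 := by
    rw [← ofReal_natCast, ← ofReal_mul, norm_exp_mul_ofReal, Real.exp_lt_one_iff]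
    have : 0 < n * Real.log q := mul_pos (by exact_mod_cast hn) (Real.log_pos hq)
    simp only [neg_re, add_re, div_ofNat_re, one_re]
    nlinarith
  set E := exp (-(1 / 2 + z) * (n * Real.log q))
  have hE2 : exp (-(1 + 2 * z) * (n * Real.log q)) = E ^ 2 := by
    rw [← Complex.exp_nat_mul]; congr 1; push_cast; ring
  have h1 : 1 - E ≠ 0 := fun h => by simp [← sub_eq_zero.mp h] at hnorm
  have h2 : 1 + E ≠ 0 := fun h => by simp [eq_neg_of_add_eq_zero_right h] at hnorm
  have hk : ((q ^ n : ℝ) : ℂ) ≠ 0 := ofReal_ne_zero.mpr (by positivity)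
  have hk1 : ((q ^ n : ℝ) : ℂ) + 1 ≠ 0 := by
    rw [← ofReal_one, ← ofReal_add]; exact ofReal_ne_zero.mpr (by positivity)
  rw [hE2, eulerA1_factor_identity h1 h2 hk hk1, eulerFactor, hE2]

end EulerFactor

lemma natDegree_coeff_injective {F : Type*} [Semiring F] :
    Function.Injective fun P : F[X] =>
      (⟨P.natDegree, fun i => P.coeff i⟩ : Σ n, Fin (n + 1) → F) := by
  intro P Q h
  obtain ⟨hdeg, hcoeff⟩ := Sigma.mk.inj_iff.mp h
  have hcoeff' := (Fin.heq_fun_iff (congrArg (· + 1) hdeg)).mp hcoeff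
  ext i
  rcases le_or_gt i P.natDegree with hi | hi
  · exact hcoeff' ⟨i, Nat.lt_succ_of_le hi⟩
  · rw [coeff_eq_zero_of_natDegree_lt hi, coeff_eq_zero_of_natDegree_lt (hdeg ▸ hi)]

lemma summable_comp_natDegree {F : Type*} [Semiring F] [Fintype F] {g : ℕ → ℝ}
    (hg0 : ∀ n, 0 ≤ g n) (hg : Summable fun n => (Fintype.card F : ℝ) ^ (n + 1) * g n) :
    Summable fun P : F[X] => g P.natDegree := by
  have hsigma : Summable fun p : Σ n, Fin (n + 1) → F => g p.1 := by
    refine (summable_sigma_of_nonneg fun p => hg0 p.1).mpr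
      ⟨fun n => .of_finite, hg.congr fun n => ?_⟩
    simp [tsum_fintype]
  exact hsigma.comp_injective natDegree_coeff_injective

section FiniteField

variable (Fq : Type*) [Field Fq] [Fintype Fq]

abbrev MonicIrreducible := {P : Fq[X] // P.Monic ∧ Irreducible P}

lemma one_lt_card_real : (1 : ℝ) < Fintype.card Fq := by
  exact_mod_cast Fintype.one_lt_card

lemma summable_eulerFactor_bound :
    Summable fun P : MonicIrreducible Fq =>
      3 / 2 * Real.exp (-(3 / 2) * Real.log (Fintype.card Fq)) ^ P.1.natDegree := by
  set q : ℝ := (Fintype.card Fq : ℝ)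
  have hq : 1 < q := one_lt_card_real Fq
  have hqr : q * Real.exp (-(3 / 2) * Real.log q) = Real.exp (-(Real.log q / 2)) := by
    nth_rewrite 1 [← Real.exp_log (by linarith : 0 < q)]
    rw [← Real.exp_add]; ring_nf
  have hgeom : Summable fun n : ℕ =>
      q ^ (n + 1) * (3 / 2 * Real.exp (-(3 / 2) * Real.log q) ^ n) := by
    refine ((summable_geometric_of_lt_one (Real.exp_pos (-(Real.log q / 2))).le
      (Real.exp_lt_one_iff.mpr (by linarith [Real.log_pos hq]))).mul_left (3 / 2 * q)).congr
      fun n => ?_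
    rw [← hqr, mul_pow]; ring
  exact (summable_comp_natDegree (fun n => by positivity) hgeom).comp_injective
    Subtype.val_injective

noncomputable def logEulerSum (z : ℂ) : ℂ :=
  ∑' P : MonicIrreducible Fq, log (eulerFactor (Fintype.card Fq) P.1.natDegree z)

lemma differentiableOn_logEulerSum :
    DifferentiableOn ℂ (logEulerSum Fq) {z : ℂ | -1 / 4 < z.re} :=
  have hq := (one_lt_card_real Fq).le
  differentiableOn_tsum_of_summable_norm (summable_eulerFactor_bound Fq)
    (fun _ => (differentiableOn_log_eulerFactor hq).mono
      (Set.ofPred_subset_ofPred.mpr fun _ hw => by linarith))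
    (isOpen_re_gt _) (fun _ _ hw => norm_log_eulerFactor_le hq (le_of_lt hw))

variable {Fq} in
lemma eulerA1_eq_exp_logEulerSum {z : ℂ} (hz : -1 / 4 ≤ z.re) :
    eulerA1 Fq z = exp (logEulerSum Fq z) := by
  have hq := one_lt_card_real Fq
  rw [logEulerSum, cexp_tsum_eq_tprod
    (fun _ => slitPlane_ne_zero (eulerFactor_mem_slitPlane hq.le (by linarith)))
    ((summable_eulerFactor_bound Fq).of_norm_bounded fun _ => norm_log_eulerFactor_le hq.le hz)]
  exact tprod_congr fun P => eulerA1_factor_eq_eulerFactor hq P.2.2.natDegree_pos (by linarith)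

lemma eulerA1_zero :
    eulerA1 Fq 0 =
      ((∏' P : MonicIrreducible Fq, (1 - ((pnorm P.1 + 1) * pnorm P.1)⁻¹) : ℝ) : ℂ) := by
  have hq := one_lt_card_real Fq
  have hpos (P : MonicIrreducible Fq) : 0 < 1 - ((pnorm P.1 + 1) * pnorm P.1)⁻¹ := by
    have : 1 ≤ pnorm P.1 := one_le_pow₀ hq.le
    have : ((pnorm P.1 + 1) * pnorm P.1)⁻¹ < 1 := inv_lt_one_of_one_lt₀ (by nlinarith)
    linarith
  have hlog (P : MonicIrreducible Fq) :
      log (eulerFactor (Fintype.card Fq) P.1.natDegree 0) =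
        (Real.log (1 - ((pnorm P.1 + 1) * pnorm P.1)⁻¹) : ℂ) := by
    rw [eulerFactor_zero (by linarith), ofReal_log (hpos P).le]; rfl
  have hsum : Summable fun P : MonicIrreducible Fq =>
      Real.log (1 - ((pnorm P.1 + 1) * pnorm P.1)⁻¹) :=
    summable_ofReal.mp <| (summable_eulerFactor_bound Fq).of_norm_bounded fun P => by
      rw [← hlog]; exact norm_log_eulerFactor_le hq.le (by norm_num)
  rw [eulerA1_eq_exp_logEulerSum (by norm_num), logEulerSum, tsum_congr hlog, ← ofReal_tsum,
    ← ofReal_exp, Real.rexp_tsum_eq_tprod hpos hsum]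

noncomputable def degreeSum : ℝ :=
  ∑' P : MonicIrreducible Fq, (P.1.natDegree : ℝ) / (pnorm P.1 * (pnorm P.1 + 1) - 1)

lemma hasDerivAt_logEulerSum_zero :
    HasDerivAt (logEulerSum Fq)
      ((2 * Real.log (Fintype.card Fq) * degreeSum Fq : ℝ) : ℂ) 0 := by
  have hq := (one_lt_card_real Fq).le
  have hU : {z : ℂ | -1 / 4 < z.re} ∈ 𝓝 0 := (isOpen_re_gt _).mem_nhds (by norm_num)
  have hsum := hasSum_deriv_of_summable_norm (summable_eulerFactor_bound Fq)
    (fun _ => (differentiableOn_log_eulerFactor hq).mono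
      (Set.ofPred_subset_ofPred.mpr fun _ hw => by linarith))
    (isOpen_re_gt _) (fun _ _ hw => norm_log_eulerFactor_le hq (le_of_lt hw)) (mem_of_mem_nhds hU)
  have hderiv : deriv (logEulerSum Fq) 0 =
      ((2 * Real.log (Fintype.card Fq) * degreeSum Fq : ℝ) : ℂ) := by
    refine hsum.tsum_eq.symm.trans ?_
    simp_rw [(hasDerivAt_log_eulerFactor_zero hq).deriv]
    rw [← ofReal_tsum, tsum_mul_left]
    rfl
  exact hderiv ▸ ((differentiableOn_logEulerSum Fq).differentiableAt hU).hasDerivAt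

lemma hasDerivAt_eulerA1_zero :
    HasDerivAt (eulerA1 Fq)
      (eulerA1 Fq 0 * ((2 * Real.log (Fintype.card Fq) * degreeSum Fq : ℝ) : ℂ)) 0 := by
  rw [eulerA1_eq_exp_logEulerSum (by norm_num)]
  exact (hasDerivAt_logEulerSum_zero Fq).cexp.congr_of_eventuallyEq
    (Filter.mem_of_superset ((isOpen_re_gt (-1 / 4)).mem_nhds (by norm_num)) fun z hz =>
      eulerA1_eq_exp_logEulerSum (le_of_lt hz))

end FiniteField

section Residue

variable (Fq : Type*) [Field Fq] [Fintype Fq] (x : ℝ)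

noncomputable def sqMulIntegrand9 (z : ℂ) : ℂ :=
  eulerA1 Fq z * exp (-(z / 2) * Real.log (Fintype.card Fq)) *
    exp ((x * z / 2) * Real.log (Fintype.card Fq)) /
    (2 * Real.log (Fintype.card Fq) * expSubOneDiv (-2 * Real.log (Fintype.card Fq) * z))

variable {Fq x} in
lemma sq_mul_integrand9 {z : ℂ} (hz : z ≠ 0) :
    z ^ 2 * integrand9 Fq x z = sqMulIntegrand9 Fq x z := by
  have hzeta : 1 - exp (-2 * z * Real.log (Fintype.card Fq)) = z *
      (2 * Real.log (Fintype.card Fq) * expSubOneDiv (-2 * Real.log (Fintype.card Fq) * z)) := by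
    rw [exp_eq_one_add_mul_expSubOneDiv]; ring_nf
  rw [integrand9, sqMulIntegrand9, hzeta, mul_inv]
  field_simp

noncomputable def residueRadius (q : ℝ) : ℝ := min (1 / 4) (Real.pi / Real.log q)

lemma residueRadius_pos {q : ℝ} (hq : 1 < q) : 0 < residueRadius q :=
  lt_min (by norm_num) (div_pos Real.pi_pos (Real.log_pos hq))

lemma re_gt_of_mem_ball_residueRadius {q : ℝ} {z : ℂ}
    (hz : z ∈ Metric.ball 0 (residueRadius q)) : -1 / 4 < z.re := by
  have := (abs_le.mp (abs_re_le_norm z)).1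
  have := (mem_ball_zero_iff.mp hz).trans_le (min_le_left _ _)
  linarith

lemma expSubOneDiv_ne_zero_of_mem_ball_residueRadius {q : ℝ} (hq : 1 < q) {z : ℂ}
    (hz : z ∈ Metric.ball 0 (residueRadius q)) : expSubOneDiv (-2 * Real.log q * z) ≠ 0 := by
  have hL := Real.log_pos hq
  apply expSubOneDiv_ne_zero
  have hz' := (lt_div_iff₀' hL).mp ((mem_ball_zero_iff.mp hz).trans_le (min_le_right _ _))
  rw [norm_mul, norm_mul, norm_neg, norm_ofNat, norm_real, Real.norm_of_nonneg hL.le]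
  linarith

lemma differentiableOn_sqMulIntegrand9 :
    DifferentiableOn ℂ (sqMulIntegrand9 Fq x)
      (Metric.ball 0 (residueRadius (Fintype.card Fq))) := by
  have hq := one_lt_card_real Fq
  have hA : DifferentiableOn ℂ (eulerA1 Fq) (Metric.ball 0 (residueRadius (Fintype.card Fq))) :=
    ((differentiableOn_logEulerSum Fq).cexp.congr fun z hz =>
      eulerA1_eq_exp_logEulerSum (le_of_lt hz)).mono fun z hz => re_gt_of_mem_ball_residueRadius hz
  refine ((hA.mul (by fun_prop)).mul (by fun_prop)).div (by fun_prop) fun z hz => ?_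
  exact mul_ne_zero (mul_ne_zero two_ne_zero (ofReal_ne_zero.mpr (Real.log_pos hq).ne'))
    (expSubOneDiv_ne_zero_of_mem_ball_residueRadius hq hz)

lemma sqMulIntegrand9_zero_ne_zero : sqMulIntegrand9 Fq x 0 ≠ 0 := by
  have hL : ((Real.log (Fintype.card Fq) : ℝ) : ℂ) ≠ 0 :=
    ofReal_ne_zero.mpr (Real.log_pos (one_lt_card_real Fq)).ne'
  rw [sqMulIntegrand9, eulerA1_eq_exp_logEulerSum (by norm_num)]
  simp only [mul_zero, expSubOneDiv_zero]
  exact div_ne_zero (mul_ne_zero (mul_ne_zero (exp_ne_zero _) (exp_ne_zero _)) (exp_ne_zero _))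
    (mul_ne_zero (mul_ne_zero two_ne_zero hL) one_ne_zero)

lemma hasDerivAt_sqMulIntegrand9_zero :
    HasDerivAt (sqMulIntegrand9 Fq x) (eulerA1 Fq 0 * (degreeSum Fq + (x + 1) / 4)) 0 := by
  set L : ℂ := ((Real.log (Fintype.card Fq) : ℝ) : ℂ)
  have hL : L ≠ 0 := ofReal_ne_zero.mpr (Real.log_pos (one_lt_card_real Fq)).ne'
  have h1 : HasDerivAt (fun z : ℂ => exp (-(z / 2) * L)) (-(1 / 2) * L) 0 := by
    simpa using (((hasDerivAt_id (0 : ℂ)).div_const 2).neg.mul_const L).cexp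
  have h2 : HasDerivAt (fun z : ℂ => exp ((x * z / 2) * L)) (x / 2 * L) 0 := by
    simpa using ((((hasDerivAt_id (0 : ℂ)).const_mul (x : ℂ)).div_const 2).mul_const L).cexp
  have h3 : HasDerivAt (fun z : ℂ => 2 * L * expSubOneDiv (-2 * L * z)) (-(2 * L ^ 2)) 0 := by
    have hE : HasDerivAt expSubOneDiv (1 / 2) (-2 * L * 0) := by
      rw [mul_zero]; exact hasDerivAt_expSubOneDiv_zero
    refine ((hE.comp 0 ((hasDerivAt_id 0).const_mul (-2 * L))).const_mul (2 * L)).congr_deriv ?_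
    ring
  refine ((((hasDerivAt_eulerA1_zero Fq).mul h1).mul h2).div h3 ?_).congr_deriv ?_
  · simp [expSubOneDiv_zero, hL]
  · simp only [Pi.mul_apply, mul_zero, expSubOneDiv_zero, zero_div, neg_zero, zero_mul, exp_zero,
      ofReal_mul, ofReal_ofNat]
    field_simp
    ring

end Residue

theorem stmt_9_general {Fq : Type*} [Field Fq] [Fintype Fq] (x : ℝ) :
    (∃ c : ℂ, c ≠ 0 ∧
      Filter.Tendsto (fun z : ℂ => z ^ 2 * integrand9 Fq x z)
        (nhdsWithin 0 {(0 : ℂ)}ᶜ) (nhds c)) ∧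
    ∃ ρ₀ : ℝ, 0 < ρ₀ ∧ ∀ ρ : ℝ, 0 < ρ → ρ < ρ₀ →
      (1 / ((Real.pi : ℂ) * Complex.I)) * (∮ z in C(0, ρ), integrand9 Fq x z) =
        (((1 / 2 : ℝ) * (∏' P : {P : Polynomial Fq // P.Monic ∧ Irreducible P},
              (1 - ((pnorm P.1 + 1) * pnorm P.1)⁻¹)) *
            (x + 1 + 4 * ∑' P : {P : Polynomial Fq // P.Monic ∧ Irreducible P},
              (P.1.natDegree : ℝ) / (pnorm P.1 * (pnorm P.1 + 1) - 1)) : ℝ) : ℂ) := by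
  have hρ₀ := residueRadius_pos (one_lt_card_real Fq)
  have hdiff := differentiableOn_sqMulIntegrand9 Fq x
  refine ⟨⟨sqMulIntegrand9 Fq x 0, sqMulIntegrand9_zero_ne_zero Fq x, ?_⟩, _, hρ₀,
    fun ρ hρ hρρ₀ => ?_⟩
  · exact ((hdiff.continuousOn.continuousAt (Metric.ball_mem_nhds 0 hρ₀)).tendsto.mono_left
      nhdsWithin_le_nhds).congr'
      (eventually_nhdsWithin_of_forall fun z hz => (sq_mul_integrand9 hz).symm)
  · have hcircle : ∮ z in C(0, ρ), integrand9 Fq x z =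
        ∮ z in C(0, ρ), (1 / (z - 0) ^ 2) • sqMulIntegrand9 Fq x z :=
      circleIntegral.integral_congr hρ.le fun z hz => by
        rw [← sq_mul_integrand9 (Metric.ne_of_mem_sphere hz hρ.ne'), sub_zero, smul_eq_mul]
        field_simp [Metric.ne_of_mem_sphere hz hρ.ne']
    rw [hcircle,
      (hdiff.mono (Metric.closedBall_subset_ball hρρ₀)).deriv_eq_smul_circleIntegral hρ,
      (hasDerivAt_sqMulIntegrand9_zero Fq x).deriv, eulerA1_zero Fq, degreeSum]
    push_cast
    field_simp
    ring

/-- `f(z) = A(1/2;z)ζ_A(1+2z)q^{-z/2}q^{xz/2}/z` has a pole of order `2`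
at `z = 0`, and for all sufficiently small `ρ > 0`,
`(1/(πi))∮_{|z|=ρ} f(z)dz = (1/2)·P(1)·(x + 1 + 4 Σ_P deg(P)/(|P|(|P|+1)−1))`,
with `P(1) = ∏_P (1 − 1/((|P|+1)|P|))`. -/
theorem stmt_9 {Fq : Type*} [Field Fq] [Fintype Fq] (hq : Odd (Fintype.card Fq)) (x : ℝ) :
    (∃ c : ℂ, c ≠ 0 ∧
      Filter.Tendsto (fun z : ℂ => z ^ 2 * integrand9 Fq x z)
        (nhdsWithin 0 {(0 : ℂ)}ᶜ) (nhds c)) ∧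
    ∃ ρ₀ : ℝ, 0 < ρ₀ ∧ ∀ ρ : ℝ, 0 < ρ → ρ < ρ₀ →
      (1 / ((Real.pi : ℂ) * Complex.I)) * (∮ z in C(0, ρ), integrand9 Fq x z) =
        (((1 / 2 : ℝ) * (∏' P : {P : Polynomial Fq // P.Monic ∧ Irreducible P},
              (1 - ((pnorm P.1 + 1) * pnorm P.1)⁻¹)) *
            (x + 1 + 4 * ∑' P : {P : Polynomial Fq // P.Monic ∧ Irreducible P},
              (P.1.natDegree : ℝ) / (pnorm P.1 * (pnorm P.1 + 1) - 1)) : ℝ) : ℂ) :=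
  stmt_9_general x
end

section
/- For k = 3 the Euler product A(1/2; z_1, z_2, z_3) evaluated at z_1 = z_2 = z_3 = 0 satisfies A(1/2; 0, 0, 0) = ∏_{P monic irreducible} ( 1 − (12|P|⁵ − 23|P|⁴ + 23|P|³ − 15|P|² + 6|P| − 1)/( |P|⁶(|P|+1) ) ); that is, for every monic irreducible P the local factor (1 − |P|^{-1})⁶ · [ (1/2)( (1 − |P|^{-1/2})^{-3} + (1 + |P|^{-1/2})^{-3} ) + 1/|P| ] · (1 + 1/|P|)^{-1} equals 1 − (12|P|⁵ − 23|P|⁴ + 23|P|³ − 15|P|² + 6|P| − 1)/(|P|⁶(|P|+1)). -/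
lemma local_factor_eq_of_sq {s : ℝ} (hs0 : s ≠ 0) (hs1 : s ≠ 1) (hs1' : s ≠ -1) :
    (1 - (s ^ 2)⁻¹) ^ 6 *
      ((1 / 2) * (((1 - s⁻¹)⁻¹) ^ 3 + ((1 + s⁻¹)⁻¹) ^ 3) + (s ^ 2)⁻¹) *
      (1 + (s ^ 2)⁻¹)⁻¹ =
    1 - (12 * (s ^ 2) ^ 5 - 23 * (s ^ 2) ^ 4 + 23 * (s ^ 2) ^ 3 - 15 * (s ^ 2) ^ 2
        + 6 * s ^ 2 - 1) / ((s ^ 2) ^ 6 * (s ^ 2 + 1)) := by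
  have hsub : s - 1 ≠ 0 := sub_ne_zero.mpr hs1
  have hadd : s + 1 ≠ 0 := by rwa [← sub_neg_eq_add, sub_ne_zero]
  have hsq : s ^ 2 + 1 ≠ 0 := by positivity
  have hm : 1 - s⁻¹ = (s - 1) / s := by field_simp
  have hp : 1 + s⁻¹ = (s + 1) / s := by field_simp
  rw [hm, hp]
  field_simp
  ring

lemma local_factor_eq {q : ℝ} (hq0 : 0 < q) (hq1 : q ≠ 1) :
    (1 - q⁻¹) ^ 6 *
      ((1 / 2) * (((1 - (Real.sqrt q)⁻¹)⁻¹) ^ 3 + ((1 + (Real.sqrt q)⁻¹)⁻¹) ^ 3) + q⁻¹) *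
      (1 + q⁻¹)⁻¹ =
    1 - (12 * q ^ 5 - 23 * q ^ 4 + 23 * q ^ 3 - 15 * q ^ 2 + 6 * q - 1) / (q ^ 6 * (q + 1)) := by
  have hsq : Real.sqrt q ^ 2 = q := Real.sq_sqrt hq0.le
  have hs0 : Real.sqrt q ≠ 0 := (Real.sqrt_pos.mpr hq0).ne'
  have hs1 : Real.sqrt q ≠ 1 := fun h => hq1 (by rw [← hsq, h, one_pow])
  have hs1' : Real.sqrt q ≠ -1 := by linarith [Real.sqrt_nonneg q]
  simpa only [hsq] using local_factor_eq_of_sq hs0 hs1 hs1'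

lemma one_lt_pnorm {Fq : Type*} [Field Fq] [Fintype Fq] {P : Polynomial Fq}
    (hP : 0 < P.natDegree) : 1 < pnorm P :=
  one_lt_pow₀ (by exact_mod_cast Fintype.one_lt_card) hP.ne'

theorem stmt_11_general {Fq : Type*} [Field Fq] [Fintype Fq] :
    (∀ P : Polynomial Fq, P.Monic → Irreducible P →
      (1 - (pnorm P)⁻¹) ^ 6 *
        ((1 / 2) * (((1 - (Real.sqrt (pnorm P))⁻¹)⁻¹) ^ 3 +
            ((1 + (Real.sqrt (pnorm P))⁻¹)⁻¹) ^ 3) + (pnorm P)⁻¹) *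
        (1 + (pnorm P)⁻¹)⁻¹ =
      1 - (12 * pnorm P ^ 5 - 23 * pnorm P ^ 4 + 23 * pnorm P ^ 3 - 15 * pnorm P ^ 2 +
            6 * pnorm P - 1) / (pnorm P ^ 6 * (pnorm P + 1))) ∧
    (∏' P : {P : Polynomial Fq // P.Monic ∧ Irreducible P},
        ((1 - (pnorm P.1)⁻¹) ^ 6 *
          ((1 / 2) * (((1 - (Real.sqrt (pnorm P.1))⁻¹)⁻¹) ^ 3 +
              ((1 + (Real.sqrt (pnorm P.1))⁻¹)⁻¹) ^ 3) + (pnorm P.1)⁻¹) *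
          (1 + (pnorm P.1)⁻¹)⁻¹)) =
      ∏' P : {P : Polynomial Fq // P.Monic ∧ Irreducible P},
        (1 - (12 * pnorm P.1 ^ 5 - 23 * pnorm P.1 ^ 4 + 23 * pnorm P.1 ^ 3 -
            15 * pnorm P.1 ^ 2 + 6 * pnorm P.1 - 1) / (pnorm P.1 ^ 6 * (pnorm P.1 + 1))) := by
  have hlocal : ∀ P : Polynomial Fq, P.Monic → Irreducible P → _ := fun P _ hirr =>
    have hP := one_lt_pnorm hirr.natDegree_pos
    local_factor_eq (zero_lt_one.trans hP) hP.ne'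
  exact ⟨hlocal, tprod_congr fun P => hlocal P.1 P.2.1 P.2.2⟩

/-- for `k = 3`,
`A(1/2;0,0,0) = ∏_P (1 − (12|P|⁵−23|P|⁴+23|P|³−15|P|²+6|P|−1)/(|P|⁶(|P|+1)))`:
for every monic irreducible `P` the local factor
`(1−|P|⁻¹)⁶·[(1/2)((1−|P|^{-1/2})^{-3}+(1+|P|^{-1/2})^{-3})+1/|P|]·(1+1/|P|)⁻¹`
equals `1 − (12|P|⁵−23|P|⁴+23|P|³−15|P|²+6|P|−1)/(|P|⁶(|P|+1))`. -/
theorem stmt_11 {Fq : Type*} [Field Fq] [Fintype Fq] (hq : Odd (Fintype.card Fq)) :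
    (∀ P : Polynomial Fq, P.Monic → Irreducible P →
      (1 - (pnorm P)⁻¹) ^ 6 *
        ((1 / 2) * (((1 - (Real.sqrt (pnorm P))⁻¹)⁻¹) ^ 3 +
            ((1 + (Real.sqrt (pnorm P))⁻¹)⁻¹) ^ 3) + (pnorm P)⁻¹) *
        (1 + (pnorm P)⁻¹)⁻¹ =
      1 - (12 * pnorm P ^ 5 - 23 * pnorm P ^ 4 + 23 * pnorm P ^ 3 - 15 * pnorm P ^ 2 +
            6 * pnorm P - 1) / (pnorm P ^ 6 * (pnorm P + 1))) ∧
    (∏' P : {P : Polynomial Fq // P.Monic ∧ Irreducible P},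
        ((1 - (pnorm P.1)⁻¹) ^ 6 *
          ((1 / 2) * (((1 - (Real.sqrt (pnorm P.1))⁻¹)⁻¹) ^ 3 +
              ((1 + (Real.sqrt (pnorm P.1))⁻¹)⁻¹) ^ 3) + (pnorm P.1)⁻¹) *
          (1 + (pnorm P.1)⁻¹)⁻¹)) =
      ∏' P : {P : Polynomial Fq // P.Monic ∧ Irreducible P},
        (1 - (12 * pnorm P.1 ^ 5 - 23 * pnorm P.1 ^ 4 + 23 * pnorm P.1 ^ 3 -
            15 * pnorm P.1 ^ 2 + 6 * pnorm P.1 - 1) / (pnorm P.1 ^ 6 * (pnorm P.1 + 1))) :=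
  stmt_11_general
end

section
/- Let K, Q ≥ 1 and let α_1,…,α_K, γ_1,…,γ_Q ∈ ℂ have positive real parts. Then the Euler product A_𝒟(α;γ) admits the closed form A_𝒟(α;γ) = ∏_{P monic irreducible} [ ∏_{j≤k≤K}(1 − |P|^{-(1+α_j+α_k)}) · ∏_{m<r≤Q}(1 − |P|^{-(1+γ_m+γ_r)}) / ∏_{k=1}^{K}∏_{m=1}^{Q}(1 − |P|^{-(1+α_k+γ_m)}) ] · (1 + 1/|P|)^{-1} · ( (1/2) · ∏_{m=1}^{Q}(1 − |P|^{-(1/2+γ_m)}) / ∏_{k=1}^{K}(1 − |P|^{-(1/2+α_k)}) + (1/2) · ∏_{m=1}^{Q}(1 + |P|^{-(1/2+γ_m)}) / ∏_{k=1}^{K}(1 + |P|^{-(1/2+α_k)}) + 1/|P| ). -/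
/-- `μ(P^c)`: the Möbius function of `F_q[x]` at a prime power, as a function of the
exponent `c`: `μ(P^0) = 1`, `μ(P^1) = −1`, `μ(P^c) = 0` for `c ≥ 2`. -/
def muExp (c : ℕ) : ℤ := if c = 0 then 1 else if c = 1 then -1 else 0

/-
Fix `P` and put `x_k = |P|^{-(1/2+α_k)}` (of modulus `< 1`) and `y_m = |P|^{-(1/2+γ_m)}`.
The `P`-part of the series is `∑ ∏ x_k^{a_k} ∏ μ(P^{c_m}) y_m^{c_m}`, and without the parity
condition it factors as `∏ (1 - x_k)⁻¹ ∏ (1 - y_m)`: geometric series in each `a_k`, and a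
two-term sum in each `c_m`. Flipping the signs of all `x_k, y_m` multiplies the term of
total degree `d` by `(-1)^d`, so the terms of positive even degree sum to half the sum of the
two factorisations, minus the term `1` of degree `0`. The rest is algebra in each factor.
-/

open Finset

theorem summable_norm_and_tsum_prod_pi {R β : Type*} [NormedCommRing R] [CompleteSpace R]
    {n : ℕ} (F : Fin n → β → R)
    (hF : ∀ i, Summable fun j => ‖F i j‖) :
    (Summable fun a : Fin n → β => ‖∏ i, F i (a i)‖) ∧
      ∑' a : Fin n → β, ∏ i, F i (a i) = ∏ i, ∑' j, F i j := by
  induction n with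
  | zero => exact ⟨.of_finite, by simp⟩
  | succ n ih =>
    obtain ⟨hs, ht⟩ := ih (fun i => F i.succ) (fun i => hF i.succ)
    let e := Fin.consEquiv (fun _ : Fin (n + 1) => β)
    have he : ∀ z, ∏ i, F i (e z i) = F 0 z.1 * ∏ i, F i.succ (z.2 i) := fun z => by
      simp [e, Fin.prod_univ_succ]
    constructor
    · rw [← e.summable_iff]
      simpa only [Function.comp_def, he] using (hF 0).mul_norm hs
    · rw [← e.tsum_eq, tsum_congr he, ← tsum_mul_tsum_of_summable_norm (hF 0) hs, ht,
        Fin.prod_univ_succ]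

theorem tsum_subtype_pos_even_eq {ι : Type*} (deg : ι → ℕ) (i₀ : ι)
    (hdeg : ∀ i, deg i = 0 ↔ i = i₀) {f : ι → ℂ} (hf : Summable f)
    (hf' : Summable fun i => (-1) ^ deg i * f i) :
    ∑' i : {i // 0 < deg i ∧ Even (deg i)}, f i
      = (∑' i, f i + ∑' i, (-1) ^ deg i * f i) / 2 - f i₀ := by
  classical
  have hindicator : ∀ i, {i | 0 < deg i ∧ Even (deg i)}.indicator f i
      = (f i + (-1) ^ deg i * f i) / 2 - if i = i₀ then f i₀ else 0 := by
    intro i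
    by_cases hi : i = i₀
    · subst hi
      simp [(hdeg i).2 rfl]
    · have hpos : 0 < deg i := Nat.pos_of_ne_zero fun h => hi ((hdeg i).1 h)
      rcases Nat.even_or_odd (deg i) with he | ho
      · simp [Set.indicator_of_mem (show i ∈ {i | 0 < deg i ∧ Even (deg i)} from ⟨hpos, he⟩),
          he.neg_one_pow, hi]
      · simp [Set.indicator_of_notMem
          (show i ∉ {i | 0 < deg i ∧ Even (deg i)} from fun h => Nat.not_even_iff_odd.2 ho h.2),
          ho.neg_one_pow, hi]
  calc ∑' i : {i // 0 < deg i ∧ Even (deg i)}, f i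
      = ∑' i, {i | 0 < deg i ∧ Even (deg i)}.indicator f i := tsum_subtype _ f
    _ = ∑' i, ((f i + (-1) ^ deg i * f i) / 2 - if i = i₀ then f i₀ else 0) := tsum_congr hindicator
    _ = (∑' i, f i + ∑' i, (-1) ^ deg i * f i) / 2 - f i₀ := by
      rw [Summable.tsum_sub ((hf.add hf').div_const 2) (hasSum_ite_eq i₀ (f i₀)).summable,
        tsum_div_const, hf.tsum_add hf']
      simp

theorem muExp_eq_zero_of_notMem {n : ℕ} (hn : n ∉ ({0, 1} : Finset ℕ)) : muExp n = 0 := by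
  simp only [mem_insert, mem_singleton, not_or] at hn
  simp [muExp, hn.1, hn.2]

theorem summable_norm_muExp_mul_pow (y : ℂ) : Summable fun n => ‖(muExp n : ℂ) * y ^ n‖ :=
  summable_of_ne_finset_zero (s := {0, 1}) fun _ hn => by simp [muExp_eq_zero_of_notMem hn]

theorem tsum_muExp_mul_pow (y : ℂ) : ∑' n, (muExp n : ℂ) * y ^ n = 1 - y := by
  rw [tsum_eq_sum (s := {0, 1}) fun _ hn => by simp [muExp_eq_zero_of_notMem hn]]
  simp [muExp, sub_eq_add_neg]

theorem norm_exp_neg_half_add_mul_lt_one {z : ℂ} (hz : 0 < z.re) {T : ℝ} (hT : 0 < T) :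
    ‖Complex.exp (-(1 / 2 + z) * T)‖ < 1 := by
  rw [Complex.norm_exp, Real.exp_lt_one_iff]
  have : (-(1 / 2 + z) * T).re = -(1 / 2 + z.re) * T := by simp
  rw [this]
  nlinarith

section LocalFactor

variable {K Q : ℕ}

def localTerm (x : Fin K → ℂ) (y : Fin Q → ℂ) (p : (Fin K → ℕ) × (Fin Q → ℕ)) : ℂ :=
  (∏ k, x k ^ p.1 k) * ∏ m, (muExp (p.2 m) : ℂ) * y m ^ p.2 m

def totalDegree (p : (Fin K → ℕ) × (Fin Q → ℕ)) : ℕ := ∑ k, p.1 k + ∑ m, p.2 m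

theorem totalDegree_eq_zero_iff (p : (Fin K → ℕ) × (Fin Q → ℕ)) :
    totalDegree p = 0 ↔ p = 0 := by
  simp [totalDegree, sum_eq_zero_iff, Prod.ext_iff, funext_iff]

theorem localTerm_neg (x : Fin K → ℂ) (y : Fin Q → ℂ) (p : (Fin K → ℕ) × (Fin Q → ℕ)) :
    localTerm (-x) (-y) p = (-1) ^ totalDegree p * localTerm x y p := by
  simp only [localTerm, totalDegree, Pi.neg_apply, neg_pow' (x _), neg_pow' (y _), pow_add,
    ← prod_pow_eq_pow_sum, prod_mul_distrib]
  ring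

theorem summable_norm_localTerm_and_tsum {x : Fin K → ℂ} (hx : ∀ k, ‖x k‖ < 1) (y : Fin Q → ℂ) :
    (Summable fun p => ‖localTerm x y p‖) ∧
      ∑' p, localTerm x y p = (∏ k, (1 - x k)⁻¹) * ∏ m, (1 - y m) := by
  obtain ⟨hs₁, ht₁⟩ := summable_norm_and_tsum_prod_pi (fun k n => x k ^ n) fun k => by
    simpa [norm_pow] using summable_geometric_of_lt_one (norm_nonneg _) (hx k)
  obtain ⟨hs₂, ht₂⟩ := summable_norm_and_tsum_prod_pi (fun m n => (muExp n : ℂ) * y m ^ n)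
    fun m => summable_norm_muExp_mul_pow (y m)
  have hs := hs₁.mul_norm hs₂
  refine ⟨hs, ?_⟩
  calc ∑' p, localTerm x y p
      = (∑' a : Fin K → ℕ, ∏ k, x k ^ a k) * ∑' c : Fin Q → ℕ, ∏ m, (muExp (c m) : ℂ) * y m ^ c m :=
        (tsum_mul_tsum_of_summable_norm hs₁ hs₂).symm
    _ = _ := by
      rw [ht₁, ht₂]
      simp only [tsum_geometric_of_norm_lt_one (hx _), tsum_muExp_mul_pow]

theorem tsum_localTerm_pos_even {x : Fin K → ℂ} (hx : ∀ k, ‖x k‖ < 1) (y : Fin Q → ℂ) :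
    ∑' p : {p : (Fin K → ℕ) × (Fin Q → ℕ) // 0 < totalDegree p ∧ Even (totalDegree p)},
        localTerm x y p
      = ((∏ k, (1 - x k)⁻¹) * (∏ m, (1 - y m))
          + (∏ k, (1 + x k)⁻¹) * ∏ m, (1 + y m)) / 2 - 1 := by
  obtain ⟨hs, ht⟩ := summable_norm_localTerm_and_tsum hx y
  obtain ⟨hs', ht'⟩ := summable_norm_localTerm_and_tsum (x := -x) (by simpa using hx) (-y)
  simp only [localTerm_neg] at hs' ht'
  rw [tsum_subtype_pos_even_eq totalDegree 0 totalDegree_eq_zero_iff hs.of_norm hs'.of_norm,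
    ht, ht']
  simp [localTerm, muExp, sub_eq_add_neg]

theorem one_add_inv_mul_tsum_localTerm_pos_even {x : Fin K → ℂ} (hx : ∀ k, ‖x k‖ < 1)
    (y : Fin Q → ℂ) {u : ℂ} (hu : 1 + u ≠ 0) :
    1 + (1 + u)⁻¹ *
        ∑' p : {p : (Fin K → ℕ) × (Fin Q → ℕ) // 0 < totalDegree p ∧ Even (totalDegree p)},
          localTerm x y p
      = (1 + u)⁻¹ * ((1 / 2) * (∏ m, (1 - y m)) / (∏ k, (1 - x k)) +
          (1 / 2) * (∏ m, (1 + y m)) / (∏ k, (1 + x k)) + u) := by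
  have hx_sub : ∏ k, (1 - x k) ≠ 0 := prod_ne_zero_iff.2 fun k _ h =>
    (hx k).ne (by rw [← sub_eq_zero.mp h, norm_one])
  have hx_add : ∏ k, (1 + x k) ≠ 0 := prod_ne_zero_iff.2 fun k _ h =>
    (hx k).ne (by rw [eq_neg_of_add_eq_zero_right h, norm_neg, norm_one])
  rw [tsum_localTerm_pos_even hx y, prod_inv_distrib, prod_inv_distrib]
  field_simp
  ring

theorem muExp_prod_mul_exp_eq_localTerm (α : Fin K → ℂ) (γ : Fin Q → ℂ) (T : ℂ)
    (p : (Fin K → ℕ) × (Fin Q → ℕ)) :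
    ((∏ m, muExp (p.2 m) : ℤ) : ℂ) *
        Complex.exp (-(∑ k, (p.1 k : ℂ) * (1 / 2 + α k) + ∑ m, (p.2 m : ℂ) * (1 / 2 + γ m)) * T)
      = localTerm (fun k => Complex.exp (-(1 / 2 + α k) * T))
          (fun m => Complex.exp (-(1 / 2 + γ m) * T)) p := by
  have hpow : ∀ (n : ℕ) (w : ℂ), Complex.exp (-(n * w) * T) = Complex.exp (-w * T) ^ n :=
    fun n w => by rw [← Complex.exp_nat_mul]; ring_nf
  rw [neg_add, add_mul, ← sum_neg_distrib, ← sum_neg_distrib, sum_mul, sum_mul, Complex.exp_add,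
    Complex.exp_sum, Complex.exp_sum]
  simp only [hpow, localTerm, Int.cast_prod, prod_mul_distrib]
  ring

theorem local_factor_eq_s16 (α : Fin K → ℂ) (γ : Fin Q → ℂ) (hα : ∀ k, 0 < (α k).re)
    {T : ℝ} (hT : 0 < T) {u : ℂ} (hu : 1 + u ≠ 0) :
    1 + (1 + u)⁻¹ *
        ∑' p : {p : (Fin K → ℕ) × (Fin Q → ℕ) //
            0 < (∑ k, p.1 k) + (∑ m, p.2 m) ∧ Even ((∑ k, p.1 k) + (∑ m, p.2 m))},
          ((∏ m, muExp (p.1.2 m) : ℤ) : ℂ) *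
            Complex.exp (-(∑ k, (p.1.1 k : ℂ) * (1 / 2 + α k) +
              ∑ m, (p.1.2 m : ℂ) * (1 / 2 + γ m)) * T)
      = (1 + u)⁻¹ *
          ((1 / 2) * (∏ m, (1 - Complex.exp (-(1 / 2 + γ m) * T))) /
              (∏ k, (1 - Complex.exp (-(1 / 2 + α k) * T))) +
            (1 / 2) * (∏ m, (1 + Complex.exp (-(1 / 2 + γ m) * T))) /
              (∏ k, (1 + Complex.exp (-(1 / 2 + α k) * T))) + u) := by
  simp only [muExp_prod_mul_exp_eq_localTerm]
  exact one_add_inv_mul_tsum_localTerm_pos_even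
    (fun k => norm_exp_neg_half_add_mul_lt_one (hα k) hT) _ hu

end LocalFactor

theorem stmt_16_general {Fq : Type*} [Field Fq] [Fintype Fq]
    (K Q : ℕ)
    (α : Fin K → ℂ) (γ : Fin Q → ℂ)
    (hα : ∀ k, 0 < (α k).re) :
    (∏' P : {P : Polynomial Fq // P.Monic ∧ Irreducible P},
      ((∏ p ∈ Finset.univ.filter (fun p : Fin K × Fin K => p.1 ≤ p.2),
          (1 - Complex.exp (-(1 + α p.1 + α p.2) *
            ((P.1.natDegree : ℂ) * Real.log (Fintype.card Fq))))) *
        (∏ p ∈ Finset.univ.filter (fun p : Fin Q × Fin Q => p.1 < p.2),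
          (1 - Complex.exp (-(1 + γ p.1 + γ p.2) *
            ((P.1.natDegree : ℂ) * Real.log (Fintype.card Fq))))) /
        (∏ k, ∏ m, (1 - Complex.exp (-(1 + α k + γ m) *
            ((P.1.natDegree : ℂ) * Real.log (Fintype.card Fq))))) *
        (1 + (1 + (((Fintype.card Fq : ℝ) ^ P.1.natDegree : ℝ) : ℂ)⁻¹)⁻¹ *
          ∑' p : {p : (Fin K → ℕ) × (Fin Q → ℕ) //
              0 < (∑ k, p.1 k) + (∑ m, p.2 m) ∧ Even ((∑ k, p.1 k) + (∑ m, p.2 m))},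
            ((∏ m, muExp (p.1.2 m) : ℤ) : ℂ) *
              Complex.exp (-(∑ k, (p.1.1 k : ℂ) * (1 / 2 + α k) +
                  ∑ m, (p.1.2 m : ℂ) * (1 / 2 + γ m)) *
                ((P.1.natDegree : ℂ) * Real.log (Fintype.card Fq)))))) =
    ∏' P : {P : Polynomial Fq // P.Monic ∧ Irreducible P},
      ((∏ p ∈ Finset.univ.filter (fun p : Fin K × Fin K => p.1 ≤ p.2),
          (1 - Complex.exp (-(1 + α p.1 + α p.2) *
            ((P.1.natDegree : ℂ) * Real.log (Fintype.card Fq))))) *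
        (∏ p ∈ Finset.univ.filter (fun p : Fin Q × Fin Q => p.1 < p.2),
          (1 - Complex.exp (-(1 + γ p.1 + γ p.2) *
            ((P.1.natDegree : ℂ) * Real.log (Fintype.card Fq))))) /
        (∏ k, ∏ m, (1 - Complex.exp (-(1 + α k + γ m) *
            ((P.1.natDegree : ℂ) * Real.log (Fintype.card Fq))))) *
        ((1 + (((Fintype.card Fq : ℝ) ^ P.1.natDegree : ℝ) : ℂ)⁻¹)⁻¹ *
          ((1 / 2) * (∏ m, (1 - Complex.exp (-(1 / 2 + γ m) *
                ((P.1.natDegree : ℂ) * Real.log (Fintype.card Fq))))) /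
              (∏ k, (1 - Complex.exp (-(1 / 2 + α k) *
                ((P.1.natDegree : ℂ) * Real.log (Fintype.card Fq))))) +
           (1 / 2) * (∏ m, (1 + Complex.exp (-(1 / 2 + γ m) *
                ((P.1.natDegree : ℂ) * Real.log (Fintype.card Fq))))) /
              (∏ k, (1 + Complex.exp (-(1 / 2 + α k) *
                ((P.1.natDegree : ℂ) * Real.log (Fintype.card Fq))))) +
           (((Fintype.card Fq : ℝ) ^ P.1.natDegree : ℝ) : ℂ)⁻¹))) := by
  have hq : (1 : ℝ) < Fintype.card Fq := by exact_mod_cast Fintype.one_lt_card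
  refine tprod_congr fun P => congrArg _ ?_
  have hT : 0 < (P.1.natDegree : ℝ) * Real.log (Fintype.card Fq) :=
    mul_pos (by exact_mod_cast P.2.2.natDegree_pos) (Real.log_pos hq)
  have hu : 1 + (((Fintype.card Fq : ℝ) ^ P.1.natDegree : ℝ) : ℂ)⁻¹ ≠ 0 := by
    rw [← Complex.ofReal_inv, ← Complex.ofReal_one, ← Complex.ofReal_add]
    exact Complex.ofReal_ne_zero.2 (by positivity)
  simpa only [Complex.ofReal_mul, Complex.ofReal_natCast] using local_factor_eq_s16 α γ hα hT hu

/-- closed form for the Euler product `A_𝒟(α;γ)`: for shifts with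
positive real parts, the product over monic irreducibles `P` of
`[∏_{j≤k}(1−|P|^{-(1+α_j+α_k)})∏_{m<r}(1−|P|^{-(1+γ_m+γ_r)})/∏_{k,m}(1−|P|^{-(1+α_k+γ_m)})]`
times `(1 + (1+1/|P|)⁻¹ Σ_{0<Σa+Σc even} (∏μ(P^{c_m}))|P|^{−(Σa_k(1/2+α_k)+Σc_m(1/2+γ_m))})`
equals the same bracket times
`(1+1/|P|)⁻¹((1/2)∏(1−|P|^{-(1/2+γ_m)})/∏(1−|P|^{-(1/2+α_k)})
+ (1/2)∏(1+|P|^{-(1/2+γ_m)})/∏(1+|P|^{-(1/2+α_k)}) + 1/|P|)`;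
here `|P|^w = exp(w·deg P·log q)`. -/
theorem stmt_16 {Fq : Type*} [Field Fq] [Fintype Fq] (hq : Odd (Fintype.card Fq))
    (K Q : ℕ) (hK : 1 ≤ K) (hQ : 1 ≤ Q)
    (α : Fin K → ℂ) (γ : Fin Q → ℂ)
    (hα : ∀ k, 0 < (α k).re) (hγ : ∀ m, 0 < (γ m).re) :
    (∏' P : {P : Polynomial Fq // P.Monic ∧ Irreducible P},
      ((∏ p ∈ Finset.univ.filter (fun p : Fin K × Fin K => p.1 ≤ p.2),
          (1 - Complex.exp (-(1 + α p.1 + α p.2) *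
            ((P.1.natDegree : ℂ) * Real.log (Fintype.card Fq))))) *
        (∏ p ∈ Finset.univ.filter (fun p : Fin Q × Fin Q => p.1 < p.2),
          (1 - Complex.exp (-(1 + γ p.1 + γ p.2) *
            ((P.1.natDegree : ℂ) * Real.log (Fintype.card Fq))))) /
        (∏ k, ∏ m, (1 - Complex.exp (-(1 + α k + γ m) *
            ((P.1.natDegree : ℂ) * Real.log (Fintype.card Fq))))) *
        (1 + (1 + (((Fintype.card Fq : ℝ) ^ P.1.natDegree : ℝ) : ℂ)⁻¹)⁻¹ *
          ∑' p : {p : (Fin K → ℕ) × (Fin Q → ℕ) //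
              0 < (∑ k, p.1 k) + (∑ m, p.2 m) ∧ Even ((∑ k, p.1 k) + (∑ m, p.2 m))},
            ((∏ m, muExp (p.1.2 m) : ℤ) : ℂ) *
              Complex.exp (-(∑ k, (p.1.1 k : ℂ) * (1 / 2 + α k) +
                  ∑ m, (p.1.2 m : ℂ) * (1 / 2 + γ m)) *
                ((P.1.natDegree : ℂ) * Real.log (Fintype.card Fq)))))) =
    ∏' P : {P : Polynomial Fq // P.Monic ∧ Irreducible P},
      ((∏ p ∈ Finset.univ.filter (fun p : Fin K × Fin K => p.1 ≤ p.2),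
          (1 - Complex.exp (-(1 + α p.1 + α p.2) *
            ((P.1.natDegree : ℂ) * Real.log (Fintype.card Fq))))) *
        (∏ p ∈ Finset.univ.filter (fun p : Fin Q × Fin Q => p.1 < p.2),
          (1 - Complex.exp (-(1 + γ p.1 + γ p.2) *
            ((P.1.natDegree : ℂ) * Real.log (Fintype.card Fq))))) /
        (∏ k, ∏ m, (1 - Complex.exp (-(1 + α k + γ m) *
            ((P.1.natDegree : ℂ) * Real.log (Fintype.card Fq))))) *
        ((1 + (((Fintype.card Fq : ℝ) ^ P.1.natDegree : ℝ) : ℂ)⁻¹)⁻¹ *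
          ((1 / 2) * (∏ m, (1 - Complex.exp (-(1 / 2 + γ m) *
                ((P.1.natDegree : ℂ) * Real.log (Fintype.card Fq))))) /
              (∏ k, (1 - Complex.exp (-(1 / 2 + α k) *
                ((P.1.natDegree : ℂ) * Real.log (Fintype.card Fq))))) +
           (1 / 2) * (∏ m, (1 + Complex.exp (-(1 / 2 + γ m) *
                ((P.1.natDegree : ℂ) * Real.log (Fintype.card Fq))))) /
              (∏ k, (1 + Complex.exp (-(1 / 2 + α k) *
                ((P.1.natDegree : ℂ) * Real.log (Fintype.card Fq))))) +
           (((Fintype.card Fq : ℝ) ^ P.1.natDegree : ℝ) : ℂ)⁻¹))) :=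
  stmt_16_general K Q α γ hα
end
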